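/- arXiv:1010.1344 — 9 statements merged into one kernel-verified Lean document; each statement's English description precedes it below -/
import Mathlib

section
/- For all real x, y with 0 < x < 1 and 0 < y < 1, the Rogers dilogarithm satisfies Abel's five-term relation: L(x) + L(y) + L(1-xy) + L((1-x)/(1-xy)) + L((1-y)/(1-xy)) = π²/2. -/
open scoped BigOperators

/-- The classical dilogarithm `Li₂(x) = ∑_{n ≥ 1} xⁿ / n²`. -/
noncomputable def Li2 (x : ℝ) : ℝ := ∑' n : ℕ, x ^ (n + 1) / ((n : ℝ) + 1) ^ 2

/-- The Rogers dilogarithm `L(x) = Li₂(x) + (1/2) · log x · log (1-x)` for `0 < x < 1`. -/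
noncomputable def rogersL (x : ℝ) : ℝ :=
  Li2 x + (1 / 2) * Real.log x * Real.log (1 - x)

open Real Set Filter Topology

lemma hasSum_li2_one : HasSum (fun n : ℕ => (1:ℝ) / ((n:ℝ)+1) ^ 2) (π^2/6) := by
  have h := hasSum_zeta_two
  rw [← hasSum_nat_add_iff' 1] at h
  simpa using h

lemma summable_inv_sq : Summable (fun n : ℕ => (1:ℝ) / ((n:ℝ)+1) ^ 2) := hasSum_li2_one.summable

lemma Li2_zero : Li2 0 = 0 := by simp [Li2]

lemma Li2_one : Li2 1 = π^2/6 := by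
  have := hasSum_li2_one.tsum_eq
  simpa [Li2] using this

lemma li2_continuousOn : ContinuousOn Li2 (Icc (0:ℝ) 1) := by
  have hc : Continuous (fun x : ℝ => max 0 (min 1 x)) :=
    continuous_const.max (continuous_const.min continuous_id)
  have hG : Continuous (fun x : ℝ => ∑' n : ℕ, (max 0 (min 1 x)) ^ (n + 1) / ((n : ℝ) + 1) ^ 2) := by
    apply continuous_tsum (fun n => ((hc.pow (n+1)).div_const _)) summable_inv_sq
    intro n x
    have h0 : (0:ℝ) ≤ max 0 (min 1 x) := le_max_left _ _
    have h1 : max 0 (min 1 x) ≤ 1 := max_le zero_le_one (min_le_left _ _)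
    rw [Real.norm_eq_abs, abs_div]
    simp only [Pi.pow_apply]
    rw [abs_of_nonneg (pow_nonneg h0 _), abs_of_nonneg (by positivity)]
    gcongr
    exact pow_le_one₀ h0 h1
  apply hG.continuousOn.congr
  intro x hx
  have : max 0 (min 1 x) = x := by
    rw [min_eq_right hx.2, max_eq_right hx.1]
  simp [Li2, this]

lemma li2_hasDerivAt {x : ℝ} (h0 : 0 < x) (h1 : x < 1) :
    HasDerivAt Li2 (-Real.log (1 - x) / x) x := by
  obtain ⟨b, hxb, hb1⟩ := exists_between h1
  have hb0 : 0 < b := h0.trans hxb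
  have hx : x ∈ Ioo 0 b := ⟨h0, hxb⟩
  have main := hasDerivAt_tsum_of_isPreconnected
    (u := fun n : ℕ => b ^ n)
    (g := fun (n : ℕ) (z : ℝ) => z ^ (n + 1) / ((n : ℝ) + 1) ^ 2)
    (g' := fun (n : ℕ) (z : ℝ) => z ^ n / ((n : ℝ) + 1))
    (summable_geometric_of_lt_one hb0.le hb1) (isOpen_Ioo (a := (0:ℝ)) (b := b))
    (isPreconnected_Ioo) (fun n z _ => by
      have hn : ((n:ℝ) + 1) ≠ 0 := by positivity
      have := (hasDerivAt_pow (n+1) z).div_const (((n:ℝ)+1)^2)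
      refine this.congr_deriv ?_
      rw [Nat.add_sub_cancel]
      push_cast
      rw [div_eq_div_iff (pow_ne_zero 2 hn) hn]
      ring) (fun n z hz => by
      rw [Real.norm_eq_abs, abs_div, abs_of_nonneg (pow_nonneg hz.1.le _),
        abs_of_nonneg (by positivity)]
      have h1n : (1:ℝ) ≤ (n:ℝ) + 1 := by linarith [Nat.cast_nonneg (α := ℝ) n]
      calc z ^ n / ((n:ℝ) + 1) ≤ z ^ n := div_le_self (pow_nonneg hz.1.le _) h1n
        _ ≤ b ^ n := pow_le_pow_left₀ hz.1.le hz.2.le n) hx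
    (by
      apply Summable.of_norm_bounded (summable_geometric_of_lt_one h0.le h1)
      intro n
      rw [Real.norm_eq_abs, abs_div, abs_of_nonneg (pow_nonneg h0.le _),
        abs_of_nonneg (by positivity)]
      have h1n : (1:ℝ) ≤ ((n:ℝ) + 1)^2 := by nlinarith [Nat.cast_nonneg (α := ℝ) n]
      calc x ^ (n+1) / ((n:ℝ) + 1)^2 ≤ x ^ (n+1) := div_le_self (pow_nonneg h0.le _) h1n
        _ ≤ x ^ n := pow_le_pow_of_le_one h0.le h1.le (Nat.le_succ n)) hx
  have hsum : HasSum (fun n : ℕ => x ^ n / ((n : ℝ) + 1)) (-Real.log (1 - x) / x) := by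
    have h := (Real.hasSum_pow_div_log_of_abs_lt_one
      (by rw [abs_of_pos h0]; exact h1)).div_const x
    refine h.congr_fun fun n => ?_
    rw [pow_succ]
    field_simp
  rw [hsum.tsum_eq] at main
  unfold Li2
  exact main

lemma rogersL_hasDerivAt {x : ℝ} (h0 : 0 < x) (h1 : x < 1) :
    HasDerivAt rogersL (-(Real.log (1 - x) / x + Real.log x / (1 - x)) / 2) x := by
  have h2 : (0:ℝ) < 1 - x := by linarith
  have hden : HasDerivAt (fun z : ℝ => 1 - z) (-1) x := by
    simpa using (hasDerivAt_id x).const_sub 1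
  have hlog2 : HasDerivAt (fun z : ℝ => Real.log (1 - z)) (-1 / (1 - x)) x :=
    hden.log h2.ne'
  have hmul : HasDerivAt (fun z : ℝ => (1/2) * Real.log z * Real.log (1 - z))
      ((1/2) * x⁻¹ * Real.log (1 - x) + (1/2) * Real.log x * (-1 / (1 - x))) x :=
    ((Real.hasDerivAt_log h0.ne').const_mul (1/2)).mul hlog2
  have h := (li2_hasDerivAt h0 h1).add hmul
  have heq : -Real.log (1 - x) / x + ((1/2) * x⁻¹ * Real.log (1 - x) + (1/2) * Real.log x * (-1 / (1 - x)))
      = -(Real.log (1 - x) / x + Real.log x / (1 - x)) / 2 := by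
    field_simp
    ring
  rw [heq] at h
  exact h

lemma tendsto_log_mul_self : Tendsto (fun x : ℝ => Real.log x * x) (𝓝[>] 0) (𝓝 0) := by
  have := tendsto_log_mul_rpow_nhdsGT_zero (r := 1) one_pos
  simpa using this

lemma slope_log_one_sub : Tendsto (fun x : ℝ => Real.log (1 - x) / x) (𝓝[>] 0) (𝓝 (-1)) := by
  have hd : HasDerivAt (fun z : ℝ => Real.log (1 - z)) (-1) 0 := by
    have hden : HasDerivAt (fun z : ℝ => 1 - z) (-1) (0:ℝ) := by
      simpa using (hasDerivAt_id (0:ℝ)).const_sub 1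
    simpa using hden.log (by norm_num)
  have := hasDerivAt_iff_tendsto_slope.1 hd
  have h2 := this.mono_left (nhdsWithin_mono (0:ℝ) (fun z hz => ne_of_gt hz : Ioi (0:ℝ) ⊆ {(0:ℝ)}ᶜ))
  refine h2.congr' ?_
  filter_upwards [self_mem_nhdsWithin] with z hz
  simp [slope_fun_def, div_eq_inv_mul]

lemma key_zero : Tendsto (fun x : ℝ => (1/2) * Real.log x * Real.log (1 - x)) (𝓝[>] (0:ℝ)) (𝓝 0) := by
  have hprod : Tendsto (fun x : ℝ => (1/2) * ((Real.log x * x) * (Real.log (1 - x) / x)))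
      (𝓝[>] (0:ℝ)) (𝓝 ((1/2) * (0 * -1))) :=
    ((tendsto_log_mul_self.mul slope_log_one_sub)).const_mul (1/2)
  rw [show (1/2 : ℝ) * (0 * -1) = 0 by ring] at hprod
  refine hprod.congr' ?_
  filter_upwards [self_mem_nhdsWithin] with z hz
  have : z ≠ 0 := ne_of_gt hz
  field_simp

lemma aux_cwa_zero : ContinuousWithinAt (fun x : ℝ => (1/2) * Real.log x * Real.log (1 - x))
    (Icc (0:ℝ) 1) 0 := by
  rw [← continuousWithinAt_diff_self]
  have hsub : Icc (0:ℝ) 1 \ {0} ⊆ Ioi 0 := by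
    rintro z ⟨⟨h0, _⟩, hz⟩
    exact lt_of_le_of_ne h0 (Ne.symm hz)
  have := key_zero.mono_left (nhdsWithin_mono 0 hsub)
  simpa [ContinuousWithinAt] using this

lemma slope_log_at_one : Tendsto (fun x : ℝ => Real.log x / (1 - x)) (𝓝[<] 1) (𝓝 (-1)) := by
  have hd : HasDerivAt Real.log 1 1 := by simpa using Real.hasDerivAt_log one_ne_zero
  have h1 := hasDerivAt_iff_tendsto_slope.1 hd
  have h2 := h1.mono_left (nhdsWithin_mono (1:ℝ) (fun z hz => ne_of_lt hz : Iio (1:ℝ) ⊆ {(1:ℝ)}ᶜ))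
  have h3 := h2.neg
  rw [show -(1:ℝ) = -1 by ring] at h3
  refine h3.congr' ?_
  filter_upwards [self_mem_nhdsWithin] with z hz
  have hne : (1:ℝ) - z ≠ 0 := by intro h; rw [sub_eq_zero] at h; exact absurd h.symm (ne_of_lt hz)
  simp only [slope_fun_def, Real.log_one, sub_zero]
  rw [show (1:ℝ) - z = -(z - 1) by ring, div_neg]
  simp [smul_eq_mul, div_eq_inv_mul]

lemma key_one : Tendsto (fun x : ℝ => (1/2) * Real.log x * Real.log (1 - x)) (𝓝[<] (1:ℝ)) (𝓝 0) := by
  have hmap : Tendsto (fun x : ℝ => 1 - x) (𝓝[<] (1:ℝ)) (𝓝[>] (0:ℝ)) := by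
    apply tendsto_nhdsWithin_of_tendsto_nhds_of_eventually_within
    · have hc : Continuous (fun x : ℝ => 1 - x) := continuous_const.sub continuous_id
      have h := hc.tendsto (1:ℝ)
      simp only [sub_self] at h
      exact h.mono_left nhdsWithin_le_nhds
    · filter_upwards [self_mem_nhdsWithin] with z hz
      simp only [mem_Ioi]
      simp only [mem_Iio] at hz
      linarith
  have hcomp : Tendsto (fun x : ℝ => Real.log (1 - x) * (1 - x)) (𝓝[<] (1:ℝ)) (𝓝 0) :=
    tendsto_log_mul_self.comp hmap
  have hprod := (hcomp.mul slope_log_at_one).const_mul (1/2 : ℝ)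
  rw [show (1/2:ℝ) * (0 * -1) = 0 by ring] at hprod
  refine hprod.congr' ?_
  filter_upwards [self_mem_nhdsWithin] with z hz
  have hne : (1:ℝ) - z ≠ 0 := by simp only [mem_Iio] at hz; intro h; linarith [sub_eq_zero.1 h]
  field_simp

lemma aux_cwa_one : ContinuousWithinAt (fun x : ℝ => (1/2) * Real.log x * Real.log (1 - x))
    (Icc (0:ℝ) 1) 1 := by
  rw [← continuousWithinAt_diff_self]
  have hsub : Icc (0:ℝ) 1 \ {1} ⊆ Iio 1 := by
    rintro z ⟨⟨_, h1⟩, hz⟩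
    exact lt_of_le_of_ne h1 hz
  have := key_one.mono_left (nhdsWithin_mono 1 hsub)
  simpa [ContinuousWithinAt] using this

lemma rogersL_continuousOn : ContinuousOn rogersL (Icc (0:ℝ) 1) := by
  apply li2_continuousOn.add
  intro p hp
  rcases eq_or_ne p 0 with rfl | hp0
  · exact aux_cwa_zero
  rcases eq_or_ne p 1 with rfl | hp1
  · exact aux_cwa_one
  · have hp0' : 0 < p := lt_of_le_of_ne hp.1 (Ne.symm hp0)
    have hp1' : p < 1 := lt_of_le_of_ne hp.2 hp1
    apply ContinuousAt.continuousWithinAt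
    have hsub : ContinuousAt (fun x : ℝ => Real.log (1 - x)) p := by
      apply (Real.continuousAt_log (by intro h; rw [sub_eq_zero] at h; exact hp1 h.symm)).comp
      exact (continuous_const.sub continuous_id).continuousAt
    exact ((Real.continuousAt_log hp0'.ne').const_mul (1/2:ℝ)).mul hsub

lemma rogersL_zero : rogersL 0 = 0 := by simp [rogersL, Li2_zero]
lemma rogersL_one : rogersL 1 = π^2/6 := by simp [rogersL, Li2_one]

lemma rogersL_reflection {x : ℝ} (h0 : 0 < x) (h1 : x < 1) :
    rogersL x + rogersL (1 - x) = π^2/6 := by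
  have hcont : ContinuousOn (fun z : ℝ => rogersL z + rogersL (1 - z)) (Icc x 1) := by
    apply ContinuousOn.add
    · exact rogersL_continuousOn.mono (Icc_subset_Icc h0.le le_rfl)
    · apply rogersL_continuousOn.comp (Continuous.continuousOn (continuous_const.sub continuous_id))
      intro z hz
      simp only [mem_Icc] at hz ⊢
      constructor <;> simp only [Pi.sub_apply, id_eq] <;> linarith
  have hderiv : ∀ z ∈ Ico x 1, HasDerivWithinAt (fun z : ℝ => rogersL z + rogersL (1 - z)) 0 (Ici z) z := by
    intro z hz
    have hz0 : 0 < z := lt_of_lt_of_le h0 hz.1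
    have hz1 : z < 1 := hz.2
    have hz0' : 0 < 1 - z := by linarith
    have hz1' : 1 - z < 1 := by linarith
    have hin : HasDerivAt (fun t : ℝ => 1 - t) (-1) z := by
      simpa using (hasDerivAt_id z).const_sub 1
    have h2 := (rogersL_hasDerivAt hz0' hz1').comp z hin
    have h3 := (rogersL_hasDerivAt hz0 hz1).add h2
    have hzero : HasDerivAt (fun z : ℝ => rogersL z + rogersL (1 - z)) 0 z := by
      refine h3.congr_deriv ?_
      rw [sub_sub_cancel]; ring
    exact hzero.hasDerivWithinAt
  have hconst := constant_of_has_deriv_right_zero hcont hderiv 1 (right_mem_Icc.2 h1.le)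
  simp only [sub_self] at hconst
  rw [rogersL_one, rogersL_zero] at hconst
  linarith [hconst]

/-- Abel's five-term relation for the Rogers dilogarithm: for `0 < x < 1`, `0 < y < 1`,
`L(x) + L(y) + L(1-xy) + L((1-x)/(1-xy)) + L((1-y)/(1-xy)) = π²/2`. -/
theorem rogersL_five_term (x y : ℝ) (hx0 : 0 < x) (hx1 : x < 1) (hy0 : 0 < y) (hy1 : y < 1) :
    rogersL x + rogersL y + rogersL (1 - x * y) +
      rogersL ((1 - x) / (1 - x * y)) + rogersL ((1 - y) / (1 - x * y)) = Real.pi ^ 2 / 2 := by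
  set F : ℝ → ℝ := fun t => rogersL t + rogersL y + rogersL (1 - t * y) +
      rogersL ((1 - t) / (1 - t * y)) + rogersL ((1 - y) / (1 - t * y)) with hF
  have h1y : (0:ℝ) < 1 - y := by linarith
  -- continuity of F on [x, 1]
  have hcont : ContinuousOn F (Icc x 1) := by
    have hPpos : ∀ t ∈ Icc x 1, 0 < 1 - t * y := by
      intro t ht
      simp only [mem_Icc] at ht
      nlinarith
    have hden : ContinuousOn (fun t : ℝ => 1 - t * y) (Icc x 1) :=
      (continuous_const.sub (continuous_id.mul continuous_const)).continuousOn
    have c1 : ContinuousOn (fun t : ℝ => rogersL t) (Icc x 1) :=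
      rogersL_continuousOn.mono (Icc_subset_Icc hx0.le le_rfl)
    have c3 : ContinuousOn (fun t : ℝ => rogersL (1 - t * y)) (Icc x 1) := by
      apply rogersL_continuousOn.comp hden
      intro t ht
      have := hPpos t ht
      simp only [mem_Icc] at ht ⊢
      constructor <;> nlinarith
    have c4 : ContinuousOn (fun t : ℝ => rogersL ((1 - t) / (1 - t * y))) (Icc x 1) := by
      apply rogersL_continuousOn.comp
        (((continuous_const.sub continuous_id).continuousOn).div hden
          (fun t ht => (hPpos t ht).ne'))
      intro t ht
      have hP := hPpos t ht
      simp only [mem_Icc] at ht ⊢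
      simp only [Pi.div_apply, Pi.sub_apply, id_eq]
      constructor
      · apply div_nonneg _ hP.le; linarith
      · rw [div_le_one hP]; nlinarith
    have c5 : ContinuousOn (fun t : ℝ => rogersL ((1 - y) / (1 - t * y))) (Icc x 1) := by
      apply rogersL_continuousOn.comp
        ((continuousOn_const).div hden (fun t ht => (hPpos t ht).ne'))
      intro t ht
      have hP := hPpos t ht
      simp only [mem_Icc] at ht ⊢
      simp only [Pi.div_apply, id_eq]
      constructor
      · exact div_nonneg h1y.le hP.le
      · rw [div_le_one hP]; nlinarith
    exact (((c1.add continuousOn_const).add c3).add c4).add c5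
  -- zero derivative on [x, 1)
  have hderiv : ∀ t ∈ Ico x 1, HasDerivWithinAt F 0 (Ici t) t := by
    intro t ht
    have ht0 : 0 < t := lt_of_lt_of_le hx0 ht.1
    have ht1 : t < 1 := ht.2
    have h1t : (0:ℝ) < 1 - t := by linarith
    have hP0 : 0 < 1 - t * y := by nlinarith
    have hP1 : 1 - t * y < 1 := by nlinarith
    have hu40 : 0 < (1 - t) / (1 - t * y) := div_pos h1t hP0
    have hu41 : (1 - t) / (1 - t * y) < 1 := by rw [div_lt_one hP0]; nlinarith
    have hu50 : 0 < (1 - y) / (1 - t * y) := div_pos h1y hP0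
    have hu51 : (1 - y) / (1 - t * y) < 1 := by rw [div_lt_one hP0]; nlinarith
    have hdenD : HasDerivAt (fun s : ℝ => 1 - s * y) (-(1 * y)) t := by
      simpa using ((hasDerivAt_id t).mul_const y).const_sub 1
    have hnumD : HasDerivAt (fun s : ℝ => 1 - s) (-1) t := by
      simpa using (hasDerivAt_id t).const_sub 1
    have T1 := rogersL_hasDerivAt ht0 ht1
    have T2 := hasDerivAt_const t (rogersL y)
    have T3 := (rogersL_hasDerivAt hP0 hP1).comp t hdenD
    have T4 := (rogersL_hasDerivAt hu40 hu41).comp t (hnumD.div hdenD hP0.ne')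
    have T5 := (rogersL_hasDerivAt hu50 hu51).comp t
      ((hasDerivAt_const t (1 - y)).div hdenD hP0.ne')
    have sum := (((T1.add T2).add T3).add T4).add T5
    simp only [Function.comp_def] at sum
    have hzero : HasDerivAt F 0 t := by
      refine sum.congr_deriv ?_
      have e4 : 1 - (1 - t) / (1 - t * y) = t * (1 - y) / (1 - t * y) := by
        field_simp; ring
      have e5 : 1 - (1 - y) / (1 - t * y) = y * (1 - t) / (1 - t * y) := by
        rw [eq_div_iff hP0.ne', sub_mul, div_mul_cancel₀ _ hP0.ne']; ring
      rw [e4, e5, sub_sub_cancel]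
      rw [Real.log_mul ht0.ne' hy0.ne',
        Real.log_div h1t.ne' hP0.ne',
        Real.log_div h1y.ne' hP0.ne',
        Real.log_div (mul_ne_zero ht0.ne' h1y.ne') hP0.ne',
        Real.log_mul ht0.ne' h1y.ne',
        Real.log_div (mul_ne_zero hy0.ne' h1t.ne') hP0.ne',
        Real.log_mul hy0.ne' h1t.ne']
      field_simp
      ring
    exact hzero.hasDerivWithinAt
  have hconst := constant_of_has_deriv_right_zero hcont hderiv 1 (right_mem_Icc.2 hx1.le)
  have hF1 : F 1 = π ^ 2 / 2 := by
    have h11 : (1:ℝ) - 1 * y = 1 - y := by ring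
    have h12 : ((1:ℝ) - 1) / (1 - 1 * y) = 0 := by rw [h11]; simp
    have h13 : ((1:ℝ) - y) / (1 - 1 * y) = 1 := by rw [h11]; exact div_self h1y.ne'
    have h12' : ((1:ℝ) - 1) / (1 - y) = 0 := by norm_num
    have h13' : ((1:ℝ) - y) / (1 - y) = 1 := div_self h1y.ne'
    rw [hF]
    simp only [h11]
    rw [h12', h13', rogersL_one, rogersL_zero]
    have := rogersL_reflection hy0 hy1
    linarith
  have := hconst
  rw [hF1] at this
  exact this.symm
end

section
/- Let r ≥ 1 and ℓ ≥ 2 be integers and set L = ℓ + r + 1. Then for all integers a, m with 1 ≤ a ≤ r and 1 ≤ m ≤ ℓ-1 the trigonometric identity sin(πm/L)·sin(π(ℓ-m)/L) + sin(πa/L)·sin(π(r+1-a)/L) = sin(π(a+m)/L)·sin(π(a+ℓ-m)/L) holds. (Equivalently, 1 + Y = sin(π(a+m)/L)sin(π(a+ℓ-m)/L)/(sin(πm/L)sin(π(ℓ-m)/L)) where Y = sin(πa/L)sin(π(r+1-a)/L)/(sin(πm/L)sin(π(ℓ-m)/L)) is the positive solution of the level-ℓ restricted constant Y-system for A_r built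 from q-dimensions at a root of unity.) -/
lemma Ar_trig_key (A B C : ℝ) :
    Real.sin A * Real.sin B + Real.sin C * Real.sin (A + B + C) =
      Real.sin (C + A) * Real.sin (C + B) := by
  simp only [Real.sin_add, Real.cos_add]
  linear_combination (-(Real.sin A * Real.sin B)) * Real.sin_sq_add_cos_sq C

/-- For integers `r ≥ 1`, `ℓ ≥ 2`, `L = ℓ + r + 1`, and `1 ≤ a ≤ r`, `1 ≤ m ≤ ℓ-1`,
the trigonometric identity
`sin(πm/L) sin(π(ℓ-m)/L) + sin(πa/L) sin(π(r+1-a)/L) = sin(π(a+m)/L) sin(π(a+ℓ-m)/L)`,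
which underlies the q-dimension solution of the level-`ℓ` restricted constant Y-system
for `A_r`. -/
theorem Ar_constant_Ysystem_trig_identity (r ℓ : ℕ) (hr : 1 ≤ r) (hℓ : 2 ≤ ℓ)
    (a m : ℕ) (ha1 : 1 ≤ a) (har : a ≤ r) (hm1 : 1 ≤ m) (hmℓ : m ≤ ℓ - 1)
    (L : ℝ) (hL : L = (ℓ : ℝ) + (r : ℝ) + 1) :
    Real.sin (Real.pi * (m : ℝ) / L) * Real.sin (Real.pi * ((ℓ : ℝ) - (m : ℝ)) / L) +
      Real.sin (Real.pi * (a : ℝ) / L) * Real.sin (Real.pi * ((r : ℝ) + 1 - (a : ℝ)) / L) =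
    Real.sin (Real.pi * ((a : ℝ) + (m : ℝ)) / L) *
      Real.sin (Real.pi * ((a : ℝ) + (ℓ : ℝ) - (m : ℝ)) / L) := by
  have hL0 : L ≠ 0 := by
    rw [hL]; positivity
  have h1 : Real.pi * ((r : ℝ) + 1 - (a : ℝ)) / L =
      Real.pi - Real.pi * ((ℓ : ℝ) + (a : ℝ)) / L := by
    have : (r : ℝ) + 1 = L - (ℓ : ℝ) := by rw [hL]; ring
    rw [this]; field_simp; ring
  rw [h1, Real.sin_pi_sub]
  have hA : Real.pi * ((ℓ : ℝ) + (a : ℝ)) / L =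
      Real.pi * (m : ℝ) / L + Real.pi * ((ℓ : ℝ) - (m : ℝ)) / L + Real.pi * (a : ℝ) / L := by
    field_simp; ring
  have hCA : Real.pi * ((a : ℝ) + (m : ℝ)) / L =
      Real.pi * (a : ℝ) / L + Real.pi * (m : ℝ) / L := by field_simp
  have hCB : Real.pi * ((a : ℝ) + (ℓ : ℝ) - (m : ℝ)) / L =
      Real.pi * (a : ℝ) / L + Real.pi * ((ℓ : ℝ) - (m : ℝ)) / L := by field_simp; ring
  rw [hA, hCA, hCB]
  exact Ar_trig_key _ _ _
end

section
/- Let T : ℕ × ℤ → ℝ be a family of nonzero real numbers with T(0,u) = 1 for all u, satisfying the unrestricted T-system for A₁: T(m,u-1)·T(m,u+1) = T(m-1,u)·T(m+1,u) + 1 for all m ≥ 1 and u ∈ ℤ. Define Y(m,u) = 1/( T(m-1,u)·T(m+1,u) ) for m ≥ 1. Then: (i) 1 + Y(m,u) = T(m,u-1)·T(m,u+1) / ( T(m-1,u)·T(m+1,u) ); (ii) for all m ≥ 2: Y(m,u-1)·Y(m,u+1)·(1+Y(m-1,u))·(1+Y(m+1,u)) = Y(m-1,u)·Y(m+1,u);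 (iii) for m = 1: Y(1,u-1)·Y(1,u+1)·(1+Y(2,u)) = Y(2,u). That is, Y solves the unrestricted Y-system for A₁. -/
/-- Every nowhere-vanishing solution of the unrestricted T-system for `A₁` gives a solution
of the unrestricted Y-system for `A₁` via `Y(m,u) = 1/(T(m-1,u) T(m+1,u))`. -/
theorem A1_Tsystem_gives_Ysystem (T Y : ℕ × ℤ → ℝ)
    (hT0 : ∀ u : ℤ, T (0, u) = 1)
    (hTne : ∀ (m : ℕ) (u : ℤ), T (m, u) ≠ 0)
    (hTsys : ∀ m : ℕ, 1 ≤ m → ∀ u : ℤ,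
      T (m, u - 1) * T (m, u + 1) = T (m - 1, u) * T (m + 1, u) + 1)
    (hY : ∀ m : ℕ, 1 ≤ m → ∀ u : ℤ, Y (m, u) = 1 / (T (m - 1, u) * T (m + 1, u))) :
    (∀ m : ℕ, 1 ≤ m → ∀ u : ℤ,
      1 + Y (m, u) = T (m, u - 1) * T (m, u + 1) / (T (m - 1, u) * T (m + 1, u))) ∧
    (∀ m : ℕ, 2 ≤ m → ∀ u : ℤ,
      Y (m, u - 1) * Y (m, u + 1) * (1 + Y (m - 1, u)) * (1 + Y (m + 1, u)) =
        Y (m - 1, u) * Y (m + 1, u)) ∧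
    (∀ u : ℤ, Y (1, u - 1) * Y (1, u + 1) * (1 + Y (2, u)) = Y (2, u)) := by
  have key : ∀ m : ℕ, 1 ≤ m → ∀ u : ℤ,
      1 + Y (m, u) = T (m, u - 1) * T (m, u + 1) / (T (m - 1, u) * T (m + 1, u)) := by
    intro m hm u
    rw [hY m hm u, hTsys m hm u]
    have hA := hTne (m - 1) u
    have hB := hTne (m + 1) u
    field_simp
  refine ⟨key, ?_, ?_⟩
  · intro m hm u
    obtain ⟨k, rfl⟩ : ∃ k, m = k + 2 := ⟨m - 2, by omega⟩
    have e1 : (k + 2 : ℕ) - 1 = k + 1 := rfl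
    have e2 : (k + 1 : ℕ) - 1 = k := rfl
    have e3 : (k + 3 : ℕ) - 1 = k + 2 := rfl
    rw [show (k + 2 : ℕ) + 1 = k + 3 from rfl, e1,
      hY (k + 2) (by omega) (u - 1), hY (k + 2) (by omega) (u + 1),
      key (k + 1) (by omega) u, key (k + 3) (by omega) u,
      hY (k + 1) (by omega) u, hY (k + 3) (by omega) u, e1, e2, e3]
    have h1 := hTne k u
    have h2 := hTne (k + 1) (u - 1)
    have h3 := hTne (k + 1) (u + 1)
    have h4 := hTne (k + 2) u
    have h5 := hTne (k + 3) (u - 1)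
    have h6 := hTne (k + 3) (u + 1)
    have h7 := hTne (k + 4) u
    field_simp
  · intro u
    have k2 := key 2 (by norm_num) u
    rw [hY 1 le_rfl (u - 1), hY 1 le_rfl (u + 1), k2, hY 2 (by norm_num) u]
    norm_num [hT0]
    have h1 := hTne 1 u
    have h2 := hTne 2 (u - 1)
    have h3 := hTne 2 (u + 1)
    have h4 := hTne 3 u
    field_simp
end

section
/- Let T, g : ℕ × ℤ → ℝ take nonzero values with T(0,u) = 1 and g(0,u) = 1 for all u. Suppose T(m,u-1)·T(m,u+1) = T(m-1,u)·T(m+1,u) + g(m,u) for all m ≥ 1, u ∈ ℤ, and g(m,u-1)·g(m,u+1) = g(m-1,u)·g(m+1,u) for all m ≥ 1, u ∈ ℤ. Define Y(m,u) = g(m,u)/( T(m-1,u)·T(m+1,u) ) for m ≥ 1. Then for all m ≥ 2 and u ∈ ℤ: Y(m,u-1)·Y(m,u+1)·(1+Y(m-1,u))·(1+Y(m+1,u)) = Y(m-1,u)·Y(m+1,u). -/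
/-- A solution of the `A₁` T-system modified by a gauge factor `g` satisfying the same
multiplicative three-term relation still produces, via `Y(m,u) = g(m,u)/(T(m-1,u) T(m+1,u))`,
a solution of the (gauge-independent) `A₁` Y-system. -/
theorem A1_gauged_Tsystem_gives_Ysystem (T g Y : ℕ × ℤ → ℝ)
    (hT0 : ∀ u : ℤ, T (0, u) = 1)
    (hg0 : ∀ u : ℤ, g (0, u) = 1)
    (hTne : ∀ (m : ℕ) (u : ℤ), T (m, u) ≠ 0)
    (hgne : ∀ (m : ℕ) (u : ℤ), g (m, u) ≠ 0)
    (hTsys : ∀ m : ℕ, 1 ≤ m → ∀ u : ℤ,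
      T (m, u - 1) * T (m, u + 1) = T (m - 1, u) * T (m + 1, u) + g (m, u))
    (hgsys : ∀ m : ℕ, 1 ≤ m → ∀ u : ℤ,
      g (m, u - 1) * g (m, u + 1) = g (m - 1, u) * g (m + 1, u))
    (hY : ∀ m : ℕ, 1 ≤ m → ∀ u : ℤ, Y (m, u) = g (m, u) / (T (m - 1, u) * T (m + 1, u))) :
    ∀ m : ℕ, 2 ≤ m → ∀ u : ℤ,
      Y (m, u - 1) * Y (m, u + 1) * (1 + Y (m - 1, u)) * (1 + Y (m + 1, u)) =
        Y (m - 1, u) * Y (m + 1, u) := by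
  intro m hm u
  obtain ⟨n, rfl⟩ := Nat.exists_eq_add_of_le hm
  have key : ∀ k : ℕ, ∀ v : ℤ,
      1 + Y (k + 1, v) = T (k + 1, v - 1) * T (k + 1, v + 1) / (T (k, v) * T (k + 2, v)) := by
    intro k v
    have h := hTsys (k + 1) (Nat.le_add_left 1 k) v
    try simp only [Nat.add_sub_cancel] at h
    rw [hY (k + 1) (Nat.le_add_left 1 k) v]
    try simp only [Nat.add_sub_cancel]
    rw [h, add_div, div_self (mul_ne_zero (hTne _ _) (hTne _ _))]
  have hY1 := hY (2 + n) (by omega) (u - 1)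
  have hY2 := hY (2 + n) (by omega) (u + 1)
  have hY3 := hY (2 + n - 1) (by omega) u
  have hY4 := hY (2 + n + 1) (by omega) u
  have k1 : (2 : ℕ) + n - 1 = n + 1 := by omega
  have k2 : (2 : ℕ) + n = n + 1 + 1 := by omega
  have k3 : (2 : ℕ) + n + 1 = n + 2 + 1 := by omega
  have h1 : 1 + Y (2 + n - 1, u) = T (n + 1, u - 1) * T (n + 1, u + 1) / (T (n, u) * T (n + 2, u)) := by
    rw [k1, key n u]
  have h2 : 1 + Y (2 + n + 1, u) = T (n + 3, u - 1) * T (n + 3, u + 1) / (T (n + 2, u) * T (n + 4, u)) := by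
    rw [k3, key (n + 2) u]
  have hg := hgsys (2 + n) (by omega) u
  simp only [k1, k2, k3, Nat.add_sub_cancel, show n + 1 + 1 - 1 = n + 1 from rfl,
    show n + 2 + 1 - 1 = n + 2 from rfl, show n + 1 - 1 = n from rfl,
    show n + 1 + 1 + 1 = n + 3 from rfl, show n + 2 + 1 + 1 = n + 4 from rfl,
    show n + 1 + 1 = n + 2 from rfl] at hY1 hY2 hY3 hY4 h1 h2 hg ⊢
  have t1 : T (n, u) ≠ 0 := hTne _ _
  have t2 : T (n + 2, u) ≠ 0 := hTne _ _
  have t3 : T (n + 4, u) ≠ 0 := hTne _ _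
  have t4 : T (n + 1, u - 1) ≠ 0 := hTne _ _
  have t5 : T (n + 1, u + 1) ≠ 0 := hTne _ _
  have t6 : T (n + 3, u - 1) ≠ 0 := hTne _ _
  have t7 : T (n + 3, u + 1) ≠ 0 := hTne _ _
  rw [h1, h2, hY1, hY2, hY3, hY4]
  field_simp
  linear_combination hg
end

section
/- Let w₁, w₂ : ℤ → ℂ and c ∈ ℂ with c ≠ 0, and suppose the 'quantum Wronskian' is constant: w₁(u)·w₂(u+2) - w₂(u)·w₁(u+2) = c for all u ∈ ℤ. For integers m ≥ -1 define T_m(u) = ( w₁(u-m-1)·w₂(u+m+1) - w₂(u-m-1)·w₁(u+m+1) ) / c. Then T_{-1}(u) = 0, T_0(u) = 1, and for all m ≥ 0 and u ∈ ℤ the A₁ T-system holds: T_m(u-1)·T_m(u+1) = T_{m-1}(u)·T_{m+1}(u) + 1. -/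
/-- Casoratian (discrete Wronskian) solution of the unrestricted T-system for `A₁`:
if `w₁(u) w₂(u+2) - w₂(u) w₁(u+2) = c ≠ 0` for all `u`, then
`T_m(u) = (w₁(u-m-1) w₂(u+m+1) - w₂(u-m-1) w₁(u+m+1))/c` satisfies `T_{-1} = 0`, `T_0 = 1`
and `T_m(u-1) T_m(u+1) = T_{m-1}(u) T_{m+1}(u) + 1` for all `m ≥ 0`. -/
theorem A1_Tsystem_casoratian (w₁ w₂ : ℤ → ℂ) (c : ℂ) (hc : c ≠ 0)
    (hW : ∀ u : ℤ, w₁ u * w₂ (u + 2) - w₂ u * w₁ (u + 2) = c)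
    (T : ℤ → ℤ → ℂ)
    (hT : ∀ m u : ℤ,
      T m u = (w₁ (u - m - 1) * w₂ (u + m + 1) - w₂ (u - m - 1) * w₁ (u + m + 1)) / c) :
    (∀ u : ℤ, T (-1) u = 0) ∧ (∀ u : ℤ, T 0 u = 1) ∧
    ∀ m : ℤ, 0 ≤ m → ∀ u : ℤ,
      T m (u - 1) * T m (u + 1) = T (m - 1) u * T (m + 1) u + 1 := by
  refine ⟨fun u => ?_, fun u => ?_, fun m _ u => ?_⟩
  · rw [hT]
    norm_num
    left; ring
  · rw [hT]
    have h := hW (u - 1)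
    have e2 : u - 0 - 1 + 2 = u + 0 + 1 := by ring
    rw [show u - 1 = u - 0 - 1 from by ring, e2] at h
    rw [h, div_self hc]
  · have h1 := hW (u - 1 - m - 1)
    have h2 := hW (u - 1 + m + 1)
    rw [hT m (u - 1), hT m (u + 1), hT (m - 1) u, hT (m + 1) u]
    have e1 : u + 1 - m - 1 = u - 1 - m - 1 + 2 := by ring
    have e2 : u + 1 + m + 1 = u - 1 + m + 1 + 2 := by ring
    have e3 : u - (m - 1) - 1 = u - 1 - m - 1 + 2 := by ring
    have e4 : u + (m - 1) + 1 = u - 1 + m + 1 := by ring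
    have e5 : u - (m + 1) - 1 = u - 1 - m - 1 := by ring
    have e6 : u + (m + 1) + 1 = u - 1 + m + 1 + 2 := by ring
    rw [e1, e2, e3, e4, e5, e6]
    set a1 := w₁ (u - 1 - m - 1)
    set a2 := w₂ (u - 1 - m - 1)
    set b1 := w₁ (u - 1 - m - 1 + 2)
    set b2 := w₂ (u - 1 - m - 1 + 2)
    set p1 := w₁ (u - 1 + m + 1)
    set p2 := w₂ (u - 1 + m + 1)
    set q1 := w₁ (u - 1 + m + 1 + 2)
    set q2 := w₂ (u - 1 + m + 1 + 2)
    field_simp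
    linear_combination (p1 * q2 - p2 * q1) * h1 + c * h2
end

section
/- Let a, b : ℤ → ℝ be positive sequences satisfying the level-2 restricted T-system (equivalently Y-system) for A₂: a(u-1)·a(u+1) = 1 + b(u) and b(u-1)·b(u+1) = 1 + a(u) for all u ∈ ℤ. Then a(u+5) = b(u) and b(u+5) = a(u) for all u; in particular both a and b are periodic with period 10 = 2(h^∨ + ℓ) where h^∨ = 3, ℓ = 2. -/
/-- Half-shift refinement of Zamolodchikov periodicity for the level-2 restricted
T-system (= Y-system) for `A₂`: the half period `h^∨ + ℓ = 5` interchanges the two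
Dynkin nodes, and the full period is `10`. -/
theorem A2_level2_periodicity (a b : ℤ → ℝ)
    (ha : ∀ u : ℤ, 0 < a u) (hb : ∀ u : ℤ, 0 < b u)
    (h1 : ∀ u : ℤ, a (u - 1) * a (u + 1) = 1 + b u)
    (h2 : ∀ u : ℤ, b (u - 1) * b (u + 1) = 1 + a u) :
    (∀ u : ℤ, a (u + 5) = b u) ∧ (∀ u : ℤ, b (u + 5) = a u) ∧
    (∀ u : ℤ, a (u + 10) = a u) ∧ (∀ u : ℤ, b (u + 10) = b u) := by
  have H1 : ∀ v : ℤ, a v * a (v + 2) = 1 + b (v + 1) := by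
    intro v
    have := h1 (v + 1)
    have hv1 : v + 1 - 1 = v := by ring
    have hv2 : v + 1 + 1 = v + 2 := by ring
    rwa [hv1, hv2] at this
  have H2 : ∀ v : ℤ, b v * b (v + 2) = 1 + a (v + 1) := by
    intro v
    have := h2 (v + 1)
    have hv1 : v + 1 - 1 = v := by ring
    have hv2 : v + 1 + 1 = v + 2 := by ring
    rwa [hv1, hv2] at this
  have key : ∀ u : ℤ, a (u + 5) = b u ∧ b (u + 5) = a u := by
    intro u
    have d1 : a u * a (u + 2) = 1 + b (u + 1) := H1 u
    have c1 : b u * b (u + 2) = 1 + a (u + 1) := H2 u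
    have d2 : b (u + 1) * b (u + 3) = 1 + a (u + 2) := by
      have := H2 (u + 1); rwa [show u + 1 + 2 = u + 3 by ring, show u + 1 + 1 = u + 2 by ring] at this
    have c2 : a (u + 1) * a (u + 3) = 1 + b (u + 2) := by
      have := H1 (u + 1); rwa [show u + 1 + 2 = u + 3 by ring, show u + 1 + 1 = u + 2 by ring] at this
    have d4 : a (u + 2) * a (u + 4) = 1 + b (u + 3) := by
      have := H1 (u + 2); rwa [show u + 2 + 2 = u + 4 by ring, show u + 2 + 1 = u + 3 by ring] at this
    have c4 : b (u + 2) * b (u + 4) = 1 + a (u + 3) := by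
      have := H2 (u + 2); rwa [show u + 2 + 2 = u + 4 by ring, show u + 2 + 1 = u + 3 by ring] at this
    have d6 : b (u + 3) * b (u + 5) = 1 + a (u + 4) := by
      have := H2 (u + 3); rwa [show u + 3 + 2 = u + 5 by ring, show u + 3 + 1 = u + 4 by ring] at this
    have c6 : a (u + 3) * a (u + 5) = 1 + b (u + 4) := by
      have := H1 (u + 3); rwa [show u + 3 + 2 = u + 5 by ring, show u + 3 + 1 = u + 4 by ring] at this
    -- derived quantities
    have d3 : a u * b (u + 1) * b (u + 3) = a u + 1 + b (u + 1) := by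
      linear_combination a u * d2 + d1
    have c3 : b u * a (u + 1) * a (u + 3) = b u + 1 + a (u + 1) := by
      linear_combination b u * c2 + c1
    have pos1 : (0:ℝ) < 1 + b (u + 1) := by have := hb (u + 1); linarith
    have pos1' : (0:ℝ) < 1 + a (u + 1) := by have := ha (u + 1); linarith
    have d5 : b (u + 1) * a (u + 4) = a u + 1 := by
      have h15 : (1 + b (u + 1)) * (b (u + 1) * a (u + 4))
          = (1 + b (u + 1)) * (a u + 1) := by
        linear_combination (a u * b (u + 1)) * d4 - (b (u + 1) * a (u + 4)) * d1 + d3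
      exact mul_left_cancel₀ (ne_of_gt pos1) h15
    have c5 : a (u + 1) * b (u + 4) = b u + 1 := by
      have h15 : (1 + a (u + 1)) * (a (u + 1) * b (u + 4))
          = (1 + a (u + 1)) * (b u + 1) := by
        linear_combination (b u * a (u + 1)) * c4 - (a (u + 1) * b (u + 4)) * c1 + c3
      exact mul_left_cancel₀ (ne_of_gt pos1') h15
    have pos2 : (0:ℝ) < a u + 1 + b (u + 1) := by
      have := ha u; have := hb (u + 1); linarith
    have pos2' : (0:ℝ) < b u + 1 + a (u + 1) := by
      have := hb u; have := ha (u + 1); linarith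
    have hb5 : b (u + 5) = a u := by
      have h16 : (a u + 1 + b (u + 1)) * b (u + 5)
          = (a u + 1 + b (u + 1)) * a u := by
        linear_combination (-(b (u + 5))) * d3 + (a u * b (u + 1)) * d6 + a u * d5
      exact mul_left_cancel₀ (ne_of_gt pos2) h16
    have ha5 : a (u + 5) = b u := by
      have h16 : (b u + 1 + a (u + 1)) * a (u + 5)
          = (b u + 1 + a (u + 1)) * b u := by
        linear_combination (-(a (u + 5))) * c3 + (b u * a (u + 1)) * c6 + b u * c5
      exact mul_left_cancel₀ (ne_of_gt pos2') h16
    exact ⟨ha5, hb5⟩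
  refine ⟨fun u => (key u).1, fun u => (key u).2, ?_, ?_⟩
  · intro u
    have h10 : u + 10 = (u + 5) + 5 := by ring
    rw [h10, (key (u + 5)).1, (key u).2]
  · intro u
    have h10 : u + 10 = (u + 5) + 5 := by ring
    rw [h10, (key (u + 5)).2, (key u).1]
end

section
/- Let a, b : ℤ → ℝ take nonzero values and satisfy the 'level-0' T-system for A₂: a(u-1)·a(u+1) = b(u) and b(u-1)·b(u+1) = a(u) for all u ∈ ℤ. Then: (i) a(u-2)·a(u)·a(u+2) = 1 for all u; (ii) a(u)·b(u+3) = 1 for all u (the 'periodicity at level 0' used to compute correlation lengths); (iii) a(u+6) = a(u) and b(u+6) = b(u) for all u, i.e. period 2h^∨ = 6. -/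
/-- 'Periodicity at level 0' for the A₂ T-system, used to compute correlation lengths:
nonvanishing solutions of `a(u-1)a(u+1) = b(u)`, `b(u-1)b(u+1) = a(u)` satisfy
`a(u-2)a(u)a(u+2) = 1`, `a(u) b(u+3) = 1`, and have period `2h^∨ = 6`. -/
theorem A2_level0_periodicity (a b : ℤ → ℝ)
    (ha : ∀ u : ℤ, a u ≠ 0) (hb : ∀ u : ℤ, b u ≠ 0)
    (h1 : ∀ u : ℤ, a (u - 1) * a (u + 1) = b u)
    (h2 : ∀ u : ℤ, b (u - 1) * b (u + 1) = a u) :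
    (∀ u : ℤ, a (u - 2) * a u * a (u + 2) = 1) ∧
    (∀ u : ℤ, a u * b (u + 3) = 1) ∧
    (∀ u : ℤ, a (u + 6) = a u) ∧ (∀ u : ℤ, b (u + 6) = b u) := by
  have h1' : ∀ u : ℤ, a u * a (u + 2) = b (u + 1) := by
    intro u
    have := h1 (u + 1)
    rw [show u + 1 - 1 = u by ring, show u + 1 + 1 = u + 2 by ring] at this
    exact this
  have key : ∀ u : ℤ, a (u - 2) * a u * a (u + 2) = 1 := by
    intro u
    have e1 := h1' (u - 2)
    rw [show u - 2 + 2 = u by ring, show u - 2 + 1 = u - 1 by ring] at e1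
    have e2 := h1' u
    have e3 := h2 u
    rw [← e1, ← e2] at e3
    have : (a (u - 2) * a u * a (u + 2)) * a u = 1 * a u := by linear_combination e3
    exact mul_right_cancel₀ (ha u) this
  have key' : ∀ u : ℤ, a u * a (u + 2) * a (u + 4) = 1 := by
    intro u
    have := key (u + 2)
    rw [show u + 2 - 2 = u by ring, show u + 2 + 2 = u + 4 by ring] at this
    exact this
  refine ⟨key, ?_, ?_, ?_⟩
  · intro u
    have e := h1' (u + 2)
    rw [show u + 2 + 2 = u + 4 by ring, show u + 2 + 1 = u + 3 by ring] at e
    have := key' u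
    linear_combination this - a u * e
  · intro u
    have e1 := key' u
    have e2 := key' (u + 2)
    rw [show u + 2 + 2 = u + 4 by ring, show u + 2 + 4 = u + 6 by ring] at e2
    have hX : a (u + 2) * a (u + 4) ≠ 0 := mul_ne_zero (ha _) (ha _)
    have : a (u + 6) * (a (u + 2) * a (u + 4)) = a u * (a (u + 2) * a (u + 4)) := by
      linear_combination e2 - e1
    exact mul_right_cancel₀ hX this
  · intro u
    have pa : ∀ v : ℤ, a (v + 6) = a v := by
      intro v
      have e1 := key' v
      have e2 := key' (v + 2)
      rw [show v + 2 + 2 = v + 4 by ring, show v + 2 + 4 = v + 6 by ring] at e2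
      have hX : a (v + 2) * a (v + 4) ≠ 0 := mul_ne_zero (ha _) (ha _)
      have : a (v + 6) * (a (v + 2) * a (v + 4)) = a v * (a (v + 2) * a (v + 4)) := by
        linear_combination e2 - e1
      exact mul_right_cancel₀ hX this
    have e1 := h1 u
    have e2 := h1 (u + 6)
    rw [show u + 6 - 1 = (u - 1) + 6 by ring, show u + 6 + 1 = (u + 1) + 6 by ring,
      pa (u - 1), pa (u + 1)] at e2
    rw [← e2, ← e1]
end

section
/- Let G ∈ ℤ and let Q ∈ ℚ[[w]] be a formal power series with constant term 1 (hence a unit, so Q^k is defined for all k ∈ ℤ) satisfying the one-variable Q-system Q + w·Q^G = 1. Then Q is unique, and for every ν ∈ ℤ and every integer N ≥ 1, the coefficient of w^N in Q^ν equals -(ν/N)·binom(N - 1 - ν - N·G, N - 1), where binom(x, k) = Π_{i=1}^k (x - i + 1)/k! is the generalized binomial coefficient; the constant term of Q^ν is 1. -/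
open scoped BigOperators

/-- Generalized binomial coefficient `binom(x, k) = ∏_{i=1}^{k} (x - i + 1) / k!` over `ℚ`. -/
def gbinomQ (x : ℚ) (k : ℕ) : ℚ :=
  (∏ i ∈ Finset.range k, (x - (i : ℚ))) / (Nat.factorial k : ℚ)

/-- Integer power `Q^G` of a formal power series (with invertible constant term),
using the formal inverse `Q⁻¹` of power series over the field `ℚ`:
for `G ≥ 0` this is `Q^G`, for `G < 0` it is `(Q⁻¹)^(-G)`. -/
noncomputable def psZpow (Q : PowerSeries ℚ) (G : ℤ) : PowerSeries ℚ :=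
  Q ^ G.toNat * Q⁻¹ ^ (-G).toNat

namespace QsysAux

open PowerSeries

noncomputable def U (Q : PowerSeries ℚ) (hQ1 : constantCoeff Q = 1) : (PowerSeries ℚ)ˣ :=
  ⟨Q, Q⁻¹, PowerSeries.mul_inv_cancel Q (by rw [hQ1]; norm_num),
    by rw [mul_comm]; exact PowerSeries.mul_inv_cancel Q (by rw [hQ1]; norm_num)⟩

lemma psZpow_eq {Q : PowerSeries ℚ} (hQ1 : constantCoeff Q = 1) (G : ℤ) :
    psZpow Q G = ((U Q hQ1 ^ G : (PowerSeries ℚ)ˣ) : PowerSeries ℚ) := by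
  rcases le_or_gt 0 G with h | h
  · lift G to ℕ using h
    simp [psZpow, U, zpow_natCast]
  · obtain ⟨n, rfl⟩ : ∃ n : ℕ, G = -(n + 1 : ℕ) := ⟨(-G).toNat - 1, by omega⟩
    have : ((-(n+1:ℕ) : ℤ)).toNat = 0 := by omega
    rw [psZpow, this, pow_zero, one_mul]
    have h2 : (-(-(n+1:ℕ) : ℤ)).toNat = n + 1 := by omega
    rw [h2, zpow_neg, zpow_natCast, ← inv_pow, Units.val_pow_eq_pow_val]
    congr 1

lemma psZpow_one {Q : PowerSeries ℚ} : psZpow Q 1 = Q := by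
  show Q ^ (1 : ℤ).toNat * Q⁻¹ ^ ((-1 : ℤ)).toNat = Q
  rw [show ((-1 : ℤ)).toNat = 0 from rfl, show ((1 : ℤ)).toNat = 1 from rfl,
    pow_zero, mul_one, pow_one]

lemma psZpow_add {Q : PowerSeries ℚ} (hQ1 : constantCoeff Q = 1) (a b : ℤ) :
    psZpow Q a * psZpow Q b = psZpow Q (a + b) := by
  rw [psZpow_eq hQ1 a, psZpow_eq hQ1 b, psZpow_eq hQ1 (a + b), zpow_add (U Q hQ1) a b,
    Units.val_mul]

lemma constCoeff_psZpow {Q : PowerSeries ℚ} (hQ1 : constantCoeff Q = 1) (ν : ℤ) :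
    constantCoeff (psZpow Q ν) = 1 := by
  simp [psZpow, map_mul, map_pow, hQ1, PowerSeries.constantCoeff_inv]

lemma psZpow_rec {Q : PowerSeries ℚ} {G : ℤ} (hQ1 : constantCoeff Q = 1)
    (hQ : Q + PowerSeries.X * psZpow Q G = 1) (ν : ℤ) :
    psZpow Q (ν + 1) = psZpow Q ν - PowerSeries.X * psZpow Q (ν + G) := by
  have hQ' : Q = 1 - PowerSeries.X * psZpow Q G := by
    rw [← hQ]; ring
  calc psZpow Q (ν + 1) = psZpow Q ν * Q := by
        rw [← psZpow_add hQ1 ν 1, psZpow_one]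
    _ = psZpow Q ν * (1 - PowerSeries.X * psZpow Q G) := by rw [← hQ']
    _ = psZpow Q ν - PowerSeries.X * (psZpow Q ν * psZpow Q G) := by ring
    _ = psZpow Q ν - PowerSeries.X * psZpow Q (ν + G) := by rw [psZpow_add hQ1]

def bb (g x : ℚ) : ℕ → ℚ
  | 0 => 1
  | n + 1 => -(x / ((n : ℚ) + 1)) * gbinomQ (((n : ℚ) + 1) - 1 - x - ((n : ℚ) + 1) * g) n

lemma prod_shift (M : ℚ) (k : ℕ) :
    ∏ i ∈ Finset.range (k + 1), (M - (i : ℚ)) =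
      M * ∏ i ∈ Finset.range k, (M - 1 - (i : ℚ)) := by
  rw [Finset.prod_range_succ']
  rw [Nat.cast_zero, sub_zero, mul_comm]
  congr 1
  apply Finset.prod_congr rfl
  intro i _
  push_cast
  ring

lemma bb_rec (g x : ℚ) (n : ℕ) : bb g (x + 1) (n + 1) = bb g x (n + 1) - bb g (x + g) n := by
  cases n with
  | zero =>
    simp only [bb, gbinomQ]
    norm_num
    ring
  | succ k =>
    have hfac : ((Nat.factorial (k + 1) : ℚ)) = ((k : ℚ) + 1) * (Nat.factorial k : ℚ) := by
      rw [Nat.factorial_succ]; push_cast; ring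
    simp only [bb]
    push_cast
    set M : ℚ := (k : ℚ) + 1 - x - ((k : ℚ) + 2) * g with hM
    have a1 : (k : ℚ) + 1 + 1 - 1 - (x + 1) - ((k : ℚ) + 1 + 1) * g = M - 1 := by
      rw [hM]; ring
    have a2 : (k : ℚ) + 1 + 1 - 1 - x - ((k : ℚ) + 1 + 1) * g = M := by
      rw [hM]; ring
    have a3 : (k : ℚ) + 1 - 1 - (x + g) - ((k : ℚ) + 1) * g = M - 1 := by
      rw [hM]; ring
    rw [a1, a2, a3]
    simp only [gbinomQ]
    rw [prod_shift M k, Finset.prod_range_succ, hfac]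
    have h1 : ((k : ℚ) + 1) ≠ 0 := by positivity
    have h2 : ((k : ℚ) + 1 + 1) ≠ 0 := by positivity
    have h3 : ((Nat.factorial k : ℚ)) ≠ 0 := by
      exact_mod_cast Nat.factorial_ne_zero k
    field_simp
    rw [hM]
    ring

lemma coeff_formula {G : ℤ} {Q : PowerSeries ℚ} (hQ1 : constantCoeff Q = 1)
    (hQ : Q + PowerSeries.X * psZpow Q G = 1) :
    ∀ (n : ℕ) (ν : ℤ), PowerSeries.coeff n (psZpow Q ν) = bb (G : ℚ) (ν : ℚ) n := by
  intro n
  induction n with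
  | zero =>
    intro ν
    rw [PowerSeries.coeff_zero_eq_constantCoeff, constCoeff_psZpow hQ1]
    rfl
  | succ k ih =>
    have key : ∀ ν : ℤ, PowerSeries.coeff (k + 1) (psZpow Q (ν + 1)) =
        PowerSeries.coeff (k + 1) (psZpow Q ν) - bb (G : ℚ) ((ν : ℚ) + (G : ℚ)) k := by
      intro ν
      rw [psZpow_rec hQ1 hQ ν, map_sub, PowerSeries.coeff_succ_X_mul, ih (ν + G)]
      push_cast
      ring_nf
    intro ν
    induction ν using Int.induction_on with
    | zero =>
      have h0 : psZpow Q 0 = 1 := by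
        rw [psZpow_eq hQ1 0, zpow_zero, Units.val_one]
      rw [h0]
      simp [bb, PowerSeries.coeff_one]
    | succ i ihp =>
      have h := key i
      rw [ihp] at h
      have hb := bb_rec (G : ℚ) (i : ℚ) k
      push_cast at h hb ⊢
      rw [h, hb]
    | pred i ihn =>
      have h := key (-i - 1)
      have he : (-(i : ℤ) - 1) + 1 = -i := by ring
      rw [he, ihn] at h
      have hb := bb_rec (G : ℚ) ((-i : ℚ) - 1) k
      rw [show (-(i : ℚ) - 1 + 1) = -(i : ℚ) by ring] at hb
      push_cast at h hb ⊢
      linarith [h, hb]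

end QsysAux

/-- Lagrange-inversion solution of the one-variable Q-system `Q + w Q^G = 1`:
the power series `Q` with constant term `1` satisfying it is unique, and for every
`ν ∈ ℤ` the series `Q^ν` has constant term `1` and, for `N ≥ 1`,
`[w^N] Q^ν = -(ν/N)·binom(N - 1 - ν - N G, N - 1)`. -/
theorem one_variable_Qsystem (G : ℤ) (Q : PowerSeries ℚ)
    (hQ1 : PowerSeries.constantCoeff Q = 1)
    (hQ : Q + PowerSeries.X * psZpow Q G = 1) :
    (∀ Q' : PowerSeries ℚ, PowerSeries.constantCoeff Q' = 1 →
        Q' + PowerSeries.X * psZpow Q' G = 1 → Q' = Q) ∧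
    ∀ ν : ℤ,
      PowerSeries.constantCoeff (psZpow Q ν) = 1 ∧
      ∀ N : ℕ, 1 ≤ N →
        PowerSeries.coeff N (psZpow Q ν) =
          -((ν : ℚ) / (N : ℚ)) *
            gbinomQ ((N : ℚ) - 1 - (ν : ℚ) - (N : ℚ) * (G : ℚ)) (N - 1) := by
  constructor
  · intro Q' h1' hQ'
    apply PowerSeries.ext
    intro n
    have e1 : PowerSeries.coeff n Q' = PowerSeries.coeff n (psZpow Q' 1) := by
      rw [QsysAux.psZpow_one]
    have e2 : PowerSeries.coeff n Q = PowerSeries.coeff n (psZpow Q 1) := by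
      rw [QsysAux.psZpow_one]
    rw [e1, e2, QsysAux.coeff_formula h1' hQ' n 1, QsysAux.coeff_formula hQ1 hQ n 1]
  · intro ν
    refine ⟨QsysAux.constCoeff_psZpow hQ1 ν, ?_⟩
    intro N hN
    obtain ⟨m, rfl⟩ : ∃ m, N = m + 1 := ⟨N - 1, by omega⟩
    rw [QsysAux.coeff_formula hQ1 hQ (m + 1) ν]
    simp only [QsysAux.bb, Nat.add_sub_cancel]
    push_cast
    ring_nf
end

section
/- Let R be a commutative ring, n ∈ ℕ, M an n×n matrix over R, and v = (v₁,...,v_n) ∈ Rⁿ. Then det( I + diag(v)·M ) = Σ_{S ⊆ {1,...,n}} ( Π_{i∈S} v_i ) · det( M_S ), where the sum is over all subsets S, M_S denotes the principal submatrix of M with rows and columns indexed by S, and det of the empty matrix is 1. -/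
open scoped BigOperators

open Matrix in
lemma det_aux {R : Type*} [CommRing R] {n : ℕ} (S : Finset (Fin n))
    (N : Matrix (Fin n) (Fin n) R)
    (h : ∀ i ∉ S, ∀ j, N i j = if i = j then 1 else 0) :
    N.det = (N.submatrix (fun i : {i // i ∈ S} => (i : Fin n))
      (fun i : {i // i ∈ S} => (i : Fin n))).det := by
  classical
  rw [← det_submatrix_equiv_self (Equiv.sumCompl (· ∈ S)) N]
  have : N.submatrix (Equiv.sumCompl (· ∈ S)) (Equiv.sumCompl (· ∈ S)) = Matrix.fromBlocks
      (N.submatrix (fun i : {i // i ∈ S} => (i : Fin n)) (fun i : {i // i ∈ S} => (i : Fin n)))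
      (N.submatrix (fun i : {i // i ∈ S} => (i : Fin n)) (fun i : {i // i ∉ S} => (i : Fin n)))
      0 1 := by
    ext i j
    cases i with
    | inl i =>
      cases j with
      | inl j => simp
      | inr j => simp
    | inr i =>
      cases j with
      | inl j =>
        simp only [Matrix.fromBlocks_apply₂₁, Matrix.zero_apply, Matrix.submatrix_apply,
          Equiv.sumCompl_apply_inr, Equiv.sumCompl_apply_inl]
        rw [h i i.2]
        have : (i : Fin n) ≠ (j : Fin n) := by
          intro hij
          exact i.2 (hij ▸ j.2)
        simp [this]
      | inr j =>
        simp only [Matrix.fromBlocks_apply₂₂, Matrix.one_apply, Matrix.submatrix_apply,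
          Equiv.sumCompl_apply_inr]
        rw [h i i.2]
        simp [Subtype.ext_iff]
  rw [this, Matrix.det_fromBlocks_zero₂₁, Matrix.det_one, mul_one]

/-- Principal-minor expansion `det(I + diag(v)·M) = ∑_{S} (∏_{i∈S} v_i) det(M_S)`,
the sum running over all subsets `S` of the index set, `M_S` being the principal
submatrix of `M` on `S` (with `det` of the empty matrix equal to `1`). -/
theorem det_one_add_diagonal_mul (R : Type*) [CommRing R] (n : ℕ)
    (M : Matrix (Fin n) (Fin n) R) (v : Fin n → R) :
    (1 + Matrix.diagonal v * M).det =
      ∑ S : Finset (Fin n), (∏ i ∈ S, v i) *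
        (M.submatrix (fun i : {i // i ∈ S} => (i : Fin n))
          (fun i : {i // i ∈ S} => (i : Fin n))).det := by
  classical
  have hrw : (1 + Matrix.diagonal v * M : Matrix (Fin n) (Fin n) R)
      = Matrix.of (fun i => v i • M i) + (1 : Matrix (Fin n) (Fin n) R) := by
    ext i j
    simp [Matrix.diagonal_mul, Matrix.add_apply, add_comm]
  rw [hrw]
  rw [show (Matrix.of (fun i => v i • M i)
      + (1 : Matrix (Fin n) (Fin n) R)).det
    = ∑ S : Finset (Fin n),
        (Matrix.detRowAlternating : (Fin n → R) [⋀^Fin n]→ₗ[R] R)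
          (S.piecewise (fun i => v i • M i) (1 : Matrix (Fin n) (Fin n) R)) from
    (Matrix.detRowAlternating (R := R) (n := Fin n)).toMultilinearMap.map_add_univ
      (fun i => v i • M i) (1 : Matrix (Fin n) (Fin n) R)]
  refine Finset.sum_congr rfl fun S _ => ?_
  have hsm : S.piecewise (fun i => v i • M i) (1 : Matrix (Fin n) (Fin n) R)
      = S.piecewise (fun i => v i • S.piecewise M (1 : Matrix (Fin n) (Fin n) R) i)
          (S.piecewise M (1 : Matrix (Fin n) (Fin n) R)) := by
    ext i j
    by_cases h : i ∈ S <;> simp [Finset.piecewise, h]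
  rw [hsm, show (Matrix.detRowAlternating : (Fin n → R) [⋀^Fin n]→ₗ[R] R)
      (S.piecewise (fun i => v i • S.piecewise M (1 : Matrix (Fin n) (Fin n) R) i)
        (S.piecewise M (1 : Matrix (Fin n) (Fin n) R)))
    = (∏ i ∈ S, v i) • (Matrix.detRowAlternating : (Fin n → R) [⋀^Fin n]→ₗ[R] R)
        (S.piecewise M (1 : Matrix (Fin n) (Fin n) R)) from
    (Matrix.detRowAlternating (R := R) (n := Fin n)).toMultilinearMap.map_piecewise_smul
      v (S.piecewise M (1 : Matrix (Fin n) (Fin n) R)) S, smul_eq_mul]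
  congr 1
  have hN : ∀ i ∉ S, ∀ j, (S.piecewise M (1 : Matrix (Fin n) (Fin n) R)) i j
      = if i = j then 1 else 0 := fun i hi j => by
    simp [Finset.piecewise, hi, Matrix.one_apply]
  have hd := det_aux S (S.piecewise M (1 : Matrix (Fin n) (Fin n) R)) hN
  rw [show (Matrix.detRowAlternating : (Fin n → R) [⋀^Fin n]→ₗ[R] R)
      (S.piecewise M (1 : Matrix (Fin n) (Fin n) R))
    = Matrix.det (S.piecewise M (1 : Matrix (Fin n) (Fin n) R)) from rfl, hd]
  congr 1
  ext i j
  simp [Finset.piecewise, i.2]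
  exact congrFun (Finset.piecewise_eq_of_mem (f := (M : Fin n → Fin n → R)) (g := (1 : Matrix (Fin n) (Fin n) R)) S i.2) j
end
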